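/- Let P be a finite poset. (1) For every x ∈ P, the piecewise-linear toggles t_x : OR(P) → OR(P) and τ_x : C(P) → C(P) are involutions. (2) For x, y ∈ P, t_x and t_y commute if and only if neither x covers y nor y covers x. (3) For x, y ∈ P, τ_x and τ_y commute if and only if x = y or x and y are incomparable. -/

import Mathlib

open scoped Classical

variable {P : Type*} [PartialOrder P]

/-- Membership in the chain polytope `C(P)`: nonnegative labels whose sum along every
chain is at most 1. -/
def InChainPolytope (P : Type*) [PartialOrder P] (g : P → ℝ) : Prop :=
  (∀ x : P, 0 ≤ g x) ∧ ∀ l : List P, l.Chain' (· < ·) → (l.map g).sum ≤ 1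

/-- Membership in the order-reversing polytope `OR(P)`. -/
def InORPolytope (P : Type*) [PartialOrder P] (f : P → ℝ) : Prop :=
  (∀ x : P, 0 ≤ f x ∧ f x ≤ 1) ∧ ∀ ⦃x y : P⦄, x ≤ y → f y ≤ f x

/-- Membership in the order-preserving polytope `OP(P)`. -/
def InOPPolytope (P : Type*) [PartialOrder P] (f : P → ℝ) : Prop :=
  (∀ x : P, 0 ≤ f x ∧ f x ≤ 1) ∧ ∀ ⦃x y : P⦄, x ≤ y → f x ≤ f y

/-- The poset `P̂`, obtained from `P` by adjoining a minimum `m̂ = ⊥` and a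
maximum `M̂ = ⊤`. -/
abbrev PHat (P : Type*) := WithBot (WithTop P)

/-- The inclusion of `P` into `P̂`. -/
def toHat (x : P) : PHat P := ((x : WithTop P) : PHat P)

/-- Extension of an order-reversing labeling to `P̂`, with `f(m̂) = 1`, `f(M̂) = 0`. -/
noncomputable def hatOR (f : P → ℝ) : PHat P → ℝ := fun y =>
  WithBot.recBotCoe 1 (fun w => WithTop.recTopCoe 0 f w) y

/-- Extension of an order-preserving labeling to `P̂`, with `f(m̂) = 0`, `f(M̂) = 1`. -/
noncomputable def hatOP (f : P → ℝ) : PHat P → ℝ := fun y =>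
  WithBot.recBotCoe 0 (fun w => WithTop.recTopCoe 1 f w) y

/-- The saturated chains `x = y_1 ⋖ y_2 ⋖ ⋯ ⋖ y_k` from `x` up to a maximal element. -/
def maxChainsFrom (x : P) : Set (List P) :=
  {l | l.Chain' (· ⋖ ·) ∧ l.head? = some x ∧ ∃ z, l.getLast? = some z ∧ IsMax z}

/-- The saturated chains `y_1 ⋖ ⋯ ⋖ y_k = x` from a minimal element up to `x`. -/
def maxChainsTo (x : P) : Set (List P) :=
  {l | l.Chain' (· ⋖ ·) ∧ (∃ a, l.head? = some a ∧ IsMin a) ∧ l.getLast? = some x}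

/-- The maximal chains of `P` containing `e`. -/
def maxChainsThru (e : P) : Set (List P) :=
  {l | l.Chain' (· ⋖ ·) ∧ (∃ a, l.head? = some a ∧ IsMin a) ∧
    (∃ z, l.getLast? = some z ∧ IsMax z) ∧ e ∈ l}

/-- The transfer map `OR : C(P) → OR(P)`:
`(OR g)(x) = max{ g(y_1) + ⋯ + g(y_k) | x = y_1 ⋖ ⋯ ⋖ y_k, y_k maximal }`. -/
noncomputable def ORmap (g : P → ℝ) (x : P) : ℝ :=
  sSup ((fun l => (l.map g).sum) '' maxChainsFrom x)

/-- The transfer map `OP : C(P) → OP(P)`: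
`(OP g)(x) = max{ g(y_1) + ⋯ + g(y_k) | y_1 ⋖ ⋯ ⋖ y_k = x, y_1 minimal }`. -/
noncomputable def OPmap (g : P → ℝ) (x : P) : ℝ :=
  sSup ((fun l => (l.map g).sum) '' maxChainsTo x)

/-- The inverse transfer map: `(OR⁻¹ f)(x) = f(x) - max{ f(y) | y ⋗ x in P̂ }`. -/
noncomputable def ORinv (f : P → ℝ) (x : P) : ℝ :=
  f x - sSup {v : ℝ | ∃ y : PHat P, toHat x ⋖ y ∧ v = hatOR f y}

/-- The inverse transfer map: `(OP⁻¹ f)(x) = f(x) - max{ f(y) | y ⋖ x in P̂ }`. -/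
noncomputable def OPinv (f : P → ℝ) (x : P) : ℝ :=
  f x - sSup {v : ℝ | ∃ y : PHat P, y ⋖ toHat x ∧ v = hatOP f y}

/-- The piecewise-linear order ideal toggle on the order-reversing polytope:
the label of `e` is replaced by
`max{f(y) | y ⋗ e in P̂} + min{f(y) | y ⋖ e in P̂} - f(e)`. -/
noncomputable def tPL (e : P) (f : P → ℝ) : P → ℝ :=
  Function.update f e
    (sSup {v : ℝ | ∃ y : PHat P, toHat e ⋖ y ∧ v = hatOR f y}
      + sInf {v : ℝ | ∃ y : PHat P, y ⋖ toHat e ∧ v = hatOR f y} - f e)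

/-- The piecewise-linear antichain (chain polytope) toggle: the label of `e` is replaced
by `1 - max{ Σ g(y_i) | (y_1,…,y_k) a maximal chain of P containing e }`. -/
noncomputable def tauPL (e : P) (g : P → ℝ) : P → ℝ :=
  Function.update g e (1 - sSup ((fun l => (l.map g).sum) '' maxChainsThru e))

/-- The indicator function of a subset. -/
noncomputable def ind (S : Set P) : P → ℝ := fun x => if x ∈ S then 1 else 0

def listComp {α : Type*} (fs : List (α → α)) : α → α := fs.foldr (· ∘ ·) id

/-!
The label `S + I - f(e)` written by `t_e` depends only on the labels of the covers of `e` in `P̂`,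
which `t_e` leaves unchanged; hence `t_e ∘ t_e` restores `f(e)`, and `t_x`, `t_y` commute unless
one of `x, y` covers the other. Every maximal chain through `e` contains `e` once, so changing
`g(e)` by `d` shifts every chain sum through `e` by `d`; hence `τ_e` is an involution, and `τ_x`,
`τ_y` commute for incomparable `x, y`, as no maximal chain through one of them contains the other.
For the converses: when `x ⋖ y`, the indicator of the complement of the up-set of `x` receives
different labels at `y` under `t_x t_y` and `t_y t_x`; when `x < y`, the zero labeling receives
different labels at `x` under `τ_x τ_y` and `τ_y τ_x`.
-/

open Function

section Hat

@[simp]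
lemma toHat_covBy_toHat_iff {x y : P} : toHat x ⋖ toHat y ↔ x ⋖ y := by
  rw [toHat, toHat, WithBot.coe_covBy_coe, WithTop.coe_covBy_coe]

@[simp]
lemma toHat_le_toHat_iff {x y : P} : toHat x ≤ toHat y ↔ x ≤ y := by
  rw [toHat, toHat, WithBot.coe_le_coe, WithTop.coe_le_coe]

@[simp]
lemma toHat_lt_toHat_iff {x y : P} : toHat x < toHat y ↔ x < y := by
  rw [toHat, toHat, WithBot.coe_lt_coe, WithTop.coe_lt_coe]

lemma exists_toHat_covBy [Finite P] (e : P) : ∃ z : PHat P, toHat e ⋖ z :=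
  exists_covBy_of_wellFoundedLT (WithBot.coe_lt_coe.2 (WithTop.coe_lt_top e)).not_isMax

lemma exists_covBy_toHat [Finite P] (e : P) : ∃ z : PHat P, z ⋖ toHat e :=
  exists_covBy_of_wellFoundedGT (WithBot.bot_lt_coe _).not_isMin

lemma hatOR_comp_toHat {α : Type*} (F : PHat α → ℝ) (hbot : F ⊥ = 1) (htop : F ⊤ = 0) :
    hatOR (fun u => F (toHat u)) = F := by
  funext z
  rcases z with _ | _ | u
  exacts [hbot.symm, htop.symm, rfl]

lemma hatOR_update_of_ne {α : Type*} (f : α → ℝ) {e : α} (c : ℝ) {z : PHat α} (hz : z ≠ toHat e) :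
    hatOR (update f e c) z = hatOR f z := by
  rcases z with _ | _ | u
  · rfl
  · rfl
  · exact update_of_ne (fun h => hz (congrArg toHat h)) _ _

end Hat

section OrderReversing

variable {x y e : P} {f : P → ℝ}

def upperLabels (f : P → ℝ) (e : P) : Set ℝ := {v | ∃ z : PHat P, toHat e ⋖ z ∧ v = hatOR f z}

def lowerLabels (f : P → ℝ) (e : P) : Set ℝ := {v | ∃ z : PHat P, z ⋖ toHat e ∧ v = hatOR f z}

lemma tPL_eq_update (e : P) (f : P → ℝ) :
    tPL e f = update f e (sSup (upperLabels f e) + sInf (lowerLabels f e) - f e) := rfl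

lemma upperLabels_update_of_not_covBy (h : ¬ e ⋖ x) (c : ℝ) :
    upperLabels (update f x c) e = upperLabels f e := by
  have key : ∀ z, toHat e ⋖ z → hatOR (update f x c) z = hatOR f z := fun z hz =>
    hatOR_update_of_ne f c (by rintro rfl; exact h (toHat_covBy_toHat_iff.1 hz))
  ext v
  exact exists_congr fun z => and_congr_right fun hz => by rw [key z hz]

lemma lowerLabels_update_of_not_covBy (h : ¬ x ⋖ e) (c : ℝ) :
    lowerLabels (update f x c) e = lowerLabels f e := by
  have key : ∀ z, z ⋖ toHat e → hatOR (update f x c) z = hatOR f z := fun z hz =>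
    hatOR_update_of_ne f c (by rintro rfl; exact h (toHat_covBy_toHat_iff.1 hz))
  ext v
  exact exists_congr fun z => and_congr_right fun hz => by rw [key z hz]

theorem tPL_tPL_self (e : P) (f : P → ℝ) : tPL e (tPL e f) = f := by
  simp only [tPL_eq_update]
  rw [upperLabels_update_of_not_covBy covBy_irrefl, lowerLabels_update_of_not_covBy covBy_irrefl,
    update_self, update_idem]
  exact update_eq_self_iff.2 (by ring)

theorem tPL_comm_of_not_covBy (hxy : ¬ x ⋖ y) (hyx : ¬ y ⋖ x) (f : P → ℝ) :
    tPL x (tPL y f) = tPL y (tPL x f) := by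
  rcases eq_or_ne x y with rfl | hne
  · rfl
  simp only [tPL_eq_update]
  rw [upperLabels_update_of_not_covBy hxy, lowerLabels_update_of_not_covBy hyx,
    upperLabels_update_of_not_covBy hyx, lowerLabels_update_of_not_covBy hxy,
    update_of_ne hne, update_of_ne hne.symm]
  exact update_comm hne.symm _ _ _

end OrderReversing

section OrderReversingCounterexample

variable {x y e : P} {f : P → ℝ}

lemma hatOR_ind_compl_Ici (x : P) : hatOR (ind (Set.Ici x)ᶜ) = ind (Set.Ici (toHat x))ᶜ := by
  have : ind (Set.Ici x)ᶜ = fun u => ind (Set.Ici (toHat x))ᶜ (toHat u) := by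
    funext u
    simp [ind]
  rw [this]
  exact hatOR_comp_toHat _ (by simp [ind, toHat]) (by simp [ind])

lemma ind_compl_Ici_mem_inORPolytope (x : P) : InORPolytope P (ind (Set.Ici x)ᶜ) := by
  refine ⟨fun u => ?_, fun u v huv => ?_⟩ <;> simp only [ind, Set.mem_compl_iff, Set.mem_Ici]
  · split_ifs <;> norm_num
  · split_ifs with hv <;> norm_num
    exact hv (‹x ≤ u›.trans huv)

variable [Finite P]

lemma csSup_upperLabels_of_forall_eq {c : ℝ} (h : ∀ z, toHat e ⋖ z → hatOR f z = c) :
    sSup (upperLabels f e) = c := by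
  obtain ⟨z, hz⟩ := exists_toHat_covBy e
  have hne : (upperLabels f e).Nonempty := ⟨_, z, hz, rfl⟩
  rw [hne.subset_singleton_iff.1 (by rintro _ ⟨z, hz, rfl⟩; exact h z hz), csSup_singleton]

lemma csInf_lowerLabels_of_forall_eq {c : ℝ} (h : ∀ z, z ⋖ toHat e → hatOR f z = c) :
    sInf (lowerLabels f e) = c := by
  obtain ⟨z, hz⟩ := exists_covBy_toHat e
  have hne : (lowerLabels f e).Nonempty := ⟨_, z, hz, rfl⟩
  rw [hne.subset_singleton_iff.1 (by rintro _ ⟨z, hz, rfl⟩; exact h z hz), csInf_singleton]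

lemma tPL_ind_compl_Ici_self (x : P) :
    tPL x (ind (Set.Ici x)ᶜ) = update (ind (Set.Ici x)ᶜ) x 1 := by
  have upper : sSup (upperLabels (ind (Set.Ici x)ᶜ) x) = 0 :=
    csSup_upperLabels_of_forall_eq fun z hz => by simp [hatOR_ind_compl_Ici, ind, hz.lt.le]
  have lower : sInf (lowerLabels (ind (Set.Ici x)ᶜ) x) = 1 :=
    csInf_lowerLabels_of_forall_eq fun z hz => by simp [hatOR_ind_compl_Ici, ind, hz.lt.not_ge]
  rw [tPL_eq_update, upper, lower]
  simp [ind]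

lemma csSup_upperLabels_update_ind_compl_Ici (hxy : x < y) (c : ℝ) :
    sSup (upperLabels (update (ind (Set.Ici x)ᶜ) x c) y) = 0 := by
  rw [upperLabels_update_of_not_covBy (fun h => h.lt.not_gt hxy)]
  refine csSup_upperLabels_of_forall_eq fun z hz => ?_
  have : toHat x ≤ z := ((toHat_lt_toHat_iff.2 hxy).trans hz.lt).le
  simp [hatOR_ind_compl_Ici, ind, this]

lemma tPL_ind_compl_Ici_apply_of_covBy (hxy : x ⋖ y) : tPL y (ind (Set.Ici x)ᶜ) y = 0 := by
  have lower : sInf (lowerLabels (ind (Set.Ici x)ᶜ) y) = 0 := by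
    refine IsLeast.csInf_eq ⟨⟨toHat x, toHat_covBy_toHat_iff.2 hxy, ?_⟩, ?_⟩
    · simp [hatOR_ind_compl_Ici, ind]
    · rintro _ ⟨z, -, rfl⟩
      rw [hatOR_ind_compl_Ici, ind]
      split_ifs <;> norm_num
  have upper := csSup_upperLabels_update_ind_compl_Ici hxy.lt (ind (Set.Ici x)ᶜ x)
  rw [update_eq_self] at upper
  rw [tPL_eq_update, update_self, upper, lower]
  simp [ind, hxy.lt.le]

lemma tPL_update_ind_compl_Ici_apply_of_covBy (hxy : x ⋖ y) :
    tPL y (update (ind (Set.Ici x)ᶜ) x 1) y = 1 := by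
  have hxy' : toHat x ⋖ toHat y := toHat_covBy_toHat_iff.2 hxy
  have lower : sInf (lowerLabels (update (ind (Set.Ici x)ᶜ) x 1) y) = 1 := by
    refine csInf_lowerLabels_of_forall_eq fun z hz => ?_
    rcases eq_or_ne z (toHat x) with rfl | hzx
    · exact update_self x 1 _
    · have : ¬ toHat x ≤ z := fun hxz => hxy'.2 (lt_of_le_of_ne hxz hzx.symm) hz.lt
      simp [hatOR_update_of_ne _ 1 hzx, hatOR_ind_compl_Ici, ind, this]
  rw [tPL_eq_update, update_self, csSup_upperLabels_update_ind_compl_Ici hxy.lt, lower,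
    update_of_ne hxy.ne']
  simp [ind, hxy.lt.le]

theorem exists_tPL_comm_ne_of_covBy (hxy : x ⋖ y) :
    ∃ f, InORPolytope P f ∧ tPL x (tPL y f) ≠ tPL y (tPL x f) := by
  refine ⟨ind (Set.Ici x)ᶜ, ind_compl_Ici_mem_inORPolytope x, fun h => zero_ne_one (α := ℝ) ?_⟩
  have := congrFun h y
  rwa [tPL_eq_update x, update_of_ne hxy.ne', tPL_ind_compl_Ici_apply_of_covBy hxy,
    tPL_ind_compl_Ici_self, tPL_update_ind_compl_Ici_apply_of_covBy hxy] at this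

end OrderReversingCounterexample

section Chains

lemma List.IsChain.append_of_getLast?_eq {α : Type*} {R : α → α → Prop} {l m : List α} {b : α}
    (hl : l.IsChain R) (hb : l.getLast? = some b) (hm : (b :: m).IsChain R) :
    (l ++ m).IsChain R ∧ (l ++ m).getLast? = (b :: m).getLast? := by
  obtain ⟨k, rfl⟩ := List.getLast?_eq_some_iff.1 hb
  rw [List.append_assoc, List.singleton_append]
  exact ⟨List.isChain_split.2 ⟨hl, hm⟩, List.getLast?_append_of_ne_nil _ (List.cons_ne_nil _ _)⟩

lemma List.IsChain.pairwise_lt_of_covBy {l : List P} (h : l.IsChain (· ⋖ ·)) :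
    l.Pairwise (· < ·) :=
  List.isChain_iff_pairwise.1 (h.imp fun _ _ => CovBy.lt)

lemma le_or_le_of_mem_maxChainsThru {e x : P} {l : List P} (hl : l ∈ maxChainsThru e)
    (hx : x ∈ l) : e ≤ x ∨ x ≤ e := by
  have : Std.Symm (fun a b : P => a ≤ b ∨ b ≤ a) := ⟨fun _ _ => Or.symm⟩
  have hcomp : l.Pairwise (fun a b : P => a ≤ b ∨ b ≤ a) :=
    (List.IsChain.pairwise_lt_of_covBy hl.1).imp fun h => Or.inl h.le
  rcases eq_or_ne e x with rfl | hne
  · exact Or.inl le_rfl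
  · exact hcomp.forall hl.2.2.2 hx hne

lemma nodup_of_mem_maxChainsThru {e : P} {l : List P} (hl : l ∈ maxChainsThru e) : l.Nodup :=
  (List.IsChain.pairwise_lt_of_covBy hl.1).nodup

lemma exists_covBy_chain_of_le [LocallyFiniteOrder P] {a b : P} (h : a ≤ b) :
    ∃ l, (a :: l).IsChain (· ⋖ ·) ∧ (a :: l).getLast? = some b := by
  obtain ⟨l, hl, hlast⟩ :=
    List.exists_isChain_cons_of_relationReflTransGen (le_iff_reflTransGen_covBy.1 h)
  exact ⟨l, hl, by rw [List.getLast?_eq_some_getLast (List.cons_ne_nil _ _), hlast]⟩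

lemma exists_mem_maxChainsThru [Finite P] {x y : P} (hxy : x ≤ y) :
    ∃ l ∈ maxChainsThru x, y ∈ l := by
  have := Fintype.ofFinite P
  let := Fintype.toLocallyFiniteOrder (α := P)
  obtain ⟨a, hax, ha⟩ := Finite.exists_le_minimal (p := fun _ : P => True) trivial (a := x)
  obtain ⟨b, hyb, hb⟩ := Finite.exists_le_maximal (p := fun _ : P => True) trivial (a := y)
  obtain ⟨l₁, hl₁, hlast₁⟩ := exists_covBy_chain_of_le hax
  obtain ⟨l₂, hl₂, hlast₂⟩ := exists_covBy_chain_of_le hxy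
  obtain ⟨l₃, hl₃, hlast₃⟩ := exists_covBy_chain_of_le hyb
  obtain ⟨hl₁₂, hlast₁₂⟩ := hl₁.append_of_getLast?_eq hlast₁ hl₂
  obtain ⟨hl, hlast⟩ := hl₁₂.append_of_getLast?_eq (hlast₁₂.trans hlast₂) hl₃
  refine ⟨a :: l₁ ++ l₂ ++ l₃, ⟨hl, ⟨a, rfl, minimal_true.1 ha⟩,
    ⟨b, hlast.trans hlast₃, maximal_true.1 hb⟩, ?_⟩, ?_⟩
  · exact List.mem_append_left _ (List.mem_append_left _ (List.mem_of_getLast? hlast₁))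
  · exact List.mem_append_left _ (List.mem_of_getLast? (hlast₁₂.trans hlast₂))

end Chains

lemma List.sum_map_update_of_mem {α M : Type*} [AddCommGroup M] (g : α → M) {x : α} (c : M)
    {l : List α} (hl : l.Nodup) (hx : x ∈ l) :
    (l.map (update g x c)).sum = (l.map g).sum + (c - g x) := by
  have hx' := List.mem_toFinset.2 hx
  rw [← List.sum_toFinset _ hl, ← List.sum_toFinset _ hl, Finset.sum_update_of_mem hx',
    ← Finset.add_sum_erase _ _ hx', Finset.sdiff_singleton_eq_erase]
  abel

lemma List.sum_map_update_of_notMem {α M : Type*} [AddCommMonoid M] (g : α → M) {x : α} (c : M)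
    {l : List α} (hx : x ∉ l) : (l.map (update g x c)).sum = (l.map g).sum :=
  congrArg List.sum (List.map_congr_left fun _ ha => update_of_ne (ne_of_mem_of_not_mem ha hx) _ _)

section Antichain

variable {x y e : P} {g : P → ℝ}

def chainSums (g : P → ℝ) (e : P) : Set ℝ := (fun l => (l.map g).sum) '' maxChainsThru e

lemma tauPL_eq_update (e : P) (g : P → ℝ) : tauPL e g = update g e (1 - sSup (chainSums g e)) :=
  rfl

lemma chainSums_update_self (c : ℝ) :
    chainSums (update g e c) e = (· + (c - g e)) '' chainSums g e := by
  rw [chainSums, chainSums, Set.image_image]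
  exact Set.image_congr fun l hl =>
    List.sum_map_update_of_mem g c (nodup_of_mem_maxChainsThru hl) hl.2.2.2

lemma chainSums_update_of_incomparable (hex : ¬ e ≤ x) (hxe : ¬ x ≤ e) (c : ℝ) :
    chainSums (update g x c) e = chainSums g e :=
  Set.image_congr fun _ hl => List.sum_map_update_of_notMem g c fun hx =>
    (le_or_le_of_mem_maxChainsThru hl hx).elim hex hxe

theorem tauPL_comm_of_incomparable (hxy : ¬ x ≤ y) (hyx : ¬ y ≤ x) (g : P → ℝ) :
    tauPL x (tauPL y g) = tauPL y (tauPL x g) := by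
  simp only [tauPL_eq_update]
  rw [chainSums_update_of_incomparable hxy hyx, chainSums_update_of_incomparable hyx hxy]
  exact update_comm (fun h => hyx h.le) _ _ _

variable [Finite P]

lemma chainSums_nonempty (g : P → ℝ) (e : P) : (chainSums g e).Nonempty :=
  let ⟨l, hl, _⟩ := exists_mem_maxChainsThru (le_refl e)
  ⟨_, l, hl, rfl⟩

theorem tauPL_tauPL_self (e : P) (hg : InChainPolytope P g) : tauPL e (tauPL e g) = g := by
  have hbdd : BddAbove (chainSums g e) := ⟨1, by
    rintro _ ⟨l, hl, rfl⟩
    exact hg.2 l (List.IsChain.imp (fun _ _ => CovBy.lt) hl.1)⟩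
  have sSup_add : ∀ d, sSup ((· + d) '' chainSums g e) = sSup (chainSums g e) + d := fun d =>
    ((OrderIso.addRight d).map_csSup' (chainSums_nonempty g e) hbdd).symm
  simp only [tauPL_eq_update]
  rw [chainSums_update_self, sSup_add, update_idem]
  exact update_eq_self_iff.2 (by ring)

theorem exists_tauPL_comm_ne_of_lt (hxy : x < y) :
    ∃ g, InChainPolytope P g ∧ tauPL x (tauPL y g) ≠ tauPL y (tauPL x g) := by
  have tauPL_zero : ∀ e : P, tauPL e 0 = update (0 : P → ℝ) e 1 := fun e => by
    have : chainSums 0 e = {0} := (chainSums_nonempty (0 : P → ℝ) e).subset_singleton_iff.1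
      (by rintro _ ⟨l, -, rfl⟩; simp [Pi.zero_def])
    rw [tauPL_eq_update, this, csSup_singleton, sub_zero]
  have sSup_chainSums : sSup (chainSums (update 0 y 1) x) = 1 := by
    obtain ⟨l, hl, hy⟩ := exists_mem_maxChainsThru hxy.le
    refine IsGreatest.csSup_eq ⟨⟨l, hl, ?_⟩, ?_⟩
    · simp [List.sum_map_update_of_mem _ _ (nodup_of_mem_maxChainsThru hl) hy, Pi.zero_def]
    · rintro _ ⟨l, hl, rfl⟩
      by_cases hy : y ∈ l
      · simp [List.sum_map_update_of_mem _ _ (nodup_of_mem_maxChainsThru hl) hy, Pi.zero_def]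
      · simp [List.sum_map_update_of_notMem _ _ hy, Pi.zero_def]
  refine ⟨0, ⟨fun _ => le_rfl, fun l _ => by simp [Pi.zero_def]⟩, fun h => ?_⟩
  have := congrFun h x
  rw [tauPL_zero, tauPL_zero, tauPL_eq_update, update_self, sSup_chainSums,
    tauPL_eq_update, update_of_ne hxy.ne, update_self] at this
  exact zero_ne_one (sub_self (1 : ℝ) ▸ this)

end Antichain

/-- The piecewise-linear toggles `t_x : OR(P) → OR(P)` and `τ_x : C(P) → C(P)` are
involutions; two toggles `t_x, t_y` commute (as maps on `OR(P)`) iff neither of `x, y`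
covers the other; two toggles `τ_x, τ_y` commute (as maps on `C(P)`) iff `x = y` or
`x` and `y` are incomparable. -/
theorem pl_toggles_involutive_and_commute
    (P : Type*) [PartialOrder P] [Fintype P] :
    (∀ (x : P) (f : P → ℝ), InORPolytope P f → tPL x (tPL x f) = f) ∧
    (∀ (x : P) (g : P → ℝ), InChainPolytope P g → tauPL x (tauPL x g) = g) ∧
    (∀ x y : P,
      (∀ f : P → ℝ, InORPolytope P f → tPL x (tPL y f) = tPL y (tPL x f)) ↔
        ¬ x ⋖ y ∧ ¬ y ⋖ x) ∧
    (∀ x y : P,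
      (∀ g : P → ℝ, InChainPolytope P g → tauPL x (tauPL y g) = tauPL y (tauPL x g)) ↔
        x = y ∨ (¬ x ≤ y ∧ ¬ y ≤ x)) := by
  refine ⟨fun x f _ => tPL_tPL_self x f, fun x g hg => tauPL_tauPL_self x hg,
    fun x y => ⟨fun hcomm => ⟨fun hxy => ?_, fun hyx => ?_⟩, fun ⟨hxy, hyx⟩ f _ =>
      tPL_comm_of_not_covBy hxy hyx f⟩,
    fun x y => ⟨fun hcomm => or_iff_not_imp_left.2 fun hne => ⟨fun hxy => ?_, fun hyx => ?_⟩, ?_⟩⟩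
  · obtain ⟨f, hf, hne⟩ := exists_tPL_comm_ne_of_covBy hxy
    exact hne (hcomm f hf)
  · obtain ⟨f, hf, hne⟩ := exists_tPL_comm_ne_of_covBy hyx
    exact hne (hcomm f hf).symm
  · obtain ⟨g, hg, hne'⟩ := exists_tauPL_comm_ne_of_lt (lt_of_le_of_ne hxy hne)
    exact hne' (hcomm g hg)
  · obtain ⟨g, hg, hne'⟩ := exists_tauPL_comm_ne_of_lt (lt_of_le_of_ne hyx (Ne.symm hne))
    exact hne' (hcomm g hg).symm
  · rintro (rfl | ⟨hxy, hyx⟩) g _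
    · rfl
    · exact tauPL_comm_of_incomparable hxy hyx g
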